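/- Let z ∈ ℂ satisfy θ[1;0](i, z)² = θ[0;1](i, z)², where the theta functions are taken at the period τ = i. Then z ∈ ℤ + ℤi. -/

import Mathlib

/-!
Write `θ₁ = θ[1;0](i, ·)` and `θ₂ = θ[0;1](i, ·)`. For `z ↦ z + i` both pick up the multiplier
`e^{π - 2πiz}`, up to sign, so `θ₁² = θ₂²` is invariant under `z ↦ z + i` and we may assume
`|Im z| ≤ 1/2`. As `θ₁(z + 1) = -θ₁(z)` and `θ₂(z + 1) = θ₂(z)`, it suffices to show that in this
strip `D = θ₁ - θ₂` vanishes only on `2ℤ`. Expanding, `D(z) = Σ_m ε_m e^{-πm²/4} e^{πimz}` with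
`ε_m = -1` for `4 ∣ m` and `ε_m = 1` otherwise, and `D(0) = 0` by Jacobi's imaginary transformation.
Pairing `m` with `-m` and subtracting `D(0)` gives
`D(z) = -4 sin²(πz/2) Σ_{n ≥ 1} ε_n e^{-πn²/4} (sin(πnz/2) / sin(πz/2))²`. In the strip the term
`n = 1`, equal to `q = e^{-π/4}`, exceeds the sum of the absolute values of all the others (a
polynomial inequality in `q ≤ 1/2`), so `D(z) = 0` forces `sin(πz/2) = 0`.
-/

open Complex

/-- The genus-one theta function with characteristic `[ε; δ]`. -/
noncomputable def theta1 (ε δ : ℤ) (τ z : ℂ) : ℂ :=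
  ∑' n : ℤ,
    Complex.exp (↑Real.pi * I * ((n : ℂ) + (ε : ℂ)/2)^2 * τ +
      2 * ↑Real.pi * I * ((n : ℂ) + (ε : ℂ)/2) * (z + (δ : ℂ)/2))

section

open Real

theorem theta1_eq_jacobiTheta₂ (ε δ : ℤ) (τ z : ℂ) :
    theta1 ε δ τ z = cexp (π * I * ε ^ 2 * τ / 4 + π * I * ε * (z + δ / 2)) *
      jacobiTheta₂ (z + δ / 2 + ε * τ / 2) τ := by
  rw [theta1, jacobiTheta₂, ← tsum_mul_left]
  refine tsum_congr fun n => ?_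
  rw [jacobiTheta₂_term, ← Complex.exp_add]
  ring_nf

theorem theta1_add_one (ε δ : ℤ) (τ z : ℂ) :
    theta1 ε δ τ (z + 1) = cexp (π * I * ε) * theta1 ε δ τ z := by
  rw [theta1_eq_jacobiTheta₂, theta1_eq_jacobiTheta₂, add_right_comm z 1, add_right_comm _ 1,
    jacobiTheta₂_add_left, ← mul_assoc, ← Complex.exp_add]
  ring_nf

theorem theta1_add_period (ε δ : ℤ) (τ z : ℂ) :
    theta1 ε δ τ (z + τ) = cexp (-π * I * (τ + 2 * z + δ)) * theta1 ε δ τ z := by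
  rw [theta1_eq_jacobiTheta₂, theta1_eq_jacobiTheta₂,
    show z + τ + δ / 2 + ε * τ / 2 = z + δ / 2 + ε * τ / 2 + τ by ring,
    jacobiTheta₂_add_left', ← mul_assoc, ← mul_assoc, ← Complex.exp_add, ← Complex.exp_add]
  ring_nf

theorem theta1_add_period_sq (ε δ : ℤ) (τ z : ℂ) :
    theta1 ε δ τ (z + τ) ^ 2 = cexp (-2 * π * I * (τ + 2 * z)) * theta1 ε δ τ z ^ 2 := by
  rw [theta1_add_period, mul_pow, ← Complex.exp_nat_mul,
    show ((2 : ℕ) : ℂ) * (-π * I * (τ + 2 * z + δ)) =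
      -2 * π * I * (τ + 2 * z) + (-δ) * (2 * π * I) by push_cast; ring,
    Complex.exp_add, ← Int.cast_neg, Complex.exp_int_mul_two_pi_mul_I, mul_one]

theorem periodic_theta1_sq_eq (ε δ ε' δ' : ℤ) (τ : ℂ) :
    Function.Periodic (fun z => theta1 ε δ τ z ^ 2 = theta1 ε' δ' τ z ^ 2) τ := by
  intro z
  simp only [theta1_add_period_sq, mul_right_inj' (Complex.exp_ne_zero _)]

theorem jacobiTheta₂_functional_equation_I (z : ℂ) :
    jacobiTheta₂ z I = cexp (-π * z ^ 2) * jacobiTheta₂ (I * z) I := by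
  rw [jacobiTheta₂_functional_equation, show -I * I = 1 by simp, one_cpow, div_I, div_I, div_I,
    show -(z * I) = -(I * z) by ring, jacobiTheta₂_neg_left,
    show -(-π * I * z ^ 2 * I) = -π * z ^ 2 by linear_combination (π * z ^ 2) * I_mul_I]
  simp

theorem theta1_one_zero_I_zero_eq : theta1 1 0 I 0 = theta1 0 1 I 0 := by
  have h : jacobiTheta₂ (1 / 2) I = cexp (-π / 4) * jacobiTheta₂ (I / 2) I := by
    rw [jacobiTheta₂_functional_equation_I]
    ring_nf
  rw [theta1_eq_jacobiTheta₂, theta1_eq_jacobiTheta₂]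
  norm_num
  rw [h, mul_assoc _ I I, I_mul_I]
  ring_nf

theorem HasSum.int_even_add_odd {M : Type*} [AddCommMonoid M] [TopologicalSpace M]
    [ContinuousAdd M] {f : ℤ → M} {a b : M} (he : HasSum (fun k => f (2 * k)) a)
    (ho : HasSum (fun k => f (2 * k + 1)) b) : HasSum f (a + b) := by
  have h2 : Function.Injective (fun k : ℤ => 2 * k) := fun _ _ h => by simp only at h; omega
  have h1 : Function.Injective (fun k : ℤ => 2 * k + 1) := fun _ _ h => by simp only at h; omega
  refine (h2.hasSum_range_iff.2 he).add_isCompl ?_ (h1.hasSum_range_iff.2 ho)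
  convert Int.isCompl_even_odd using 2 <;> ext n <;>
    simp only [Set.mem_range, Set.mem_ofPred_eq, Int.even_iff, Int.odd_iff] <;>
    exact ⟨by rintro ⟨k, rfl⟩; omega, fun h => ⟨n / 2, by omega⟩⟩

theorem Complex.norm_cos_le_cosh_im (z : ℂ) : ‖cos z‖ ≤ Real.cosh z.im := by
  have h : ‖2 * cos z‖ ≤ 2 * Real.cosh z.im := by
    rw [two_cos, Real.cosh_eq]
    refine (norm_add_le _ _).trans_eq ?_
    simp only [Complex.norm_exp, Complex.mul_I_re, neg_mul, Complex.neg_re, neg_neg]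
    ring
  rw [norm_mul, Complex.norm_two] at h
  linarith

theorem Real.cosh_le_exp_abs (x : ℝ) : Real.cosh x ≤ Real.exp |x| := by
  rw [← Real.cosh_abs, Real.cosh_eq]
  linarith [Real.exp_le_exp.2 (show -|x| ≤ |x| by linarith [abs_nonneg x])]

namespace ThetaLattice

noncomputable def diffSign (m : ℤ) : ℂ := if 4 ∣ m then -1 else 1

theorem norm_diffSign (m : ℤ) : ‖diffSign m‖ = 1 := by
  unfold diffSign; split_ifs <;> simp

theorem diffSign_neg (m : ℤ) : diffSign (-m) = diffSign m := by
  simp [diffSign]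

theorem diffSign_two_mul_add_one (n : ℤ) : diffSign (2 * n + 1) = 1 := by
  rw [diffSign, if_neg (by omega)]

theorem diffSign_two_mul (n : ℤ) : diffSign (2 * n) = -(-1) ^ n := by
  rcases Int.even_or_odd n with hn | hn
  · rw [diffSign, if_pos (by obtain ⟨k, rfl⟩ := hn; omega), hn.neg_one_zpow]
  · rw [diffSign, if_neg (by obtain ⟨k, rfl⟩ := hn; omega), hn.neg_one_zpow, neg_neg]

noncomputable def diffTerm (w : ℂ) (m : ℤ) : ℂ :=
  diffSign m * Real.exp (-π * m ^ 2 / 4) * cexp (π * I * m * w)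

theorem norm_diffTerm (w : ℂ) (m : ℤ) :
    ‖diffTerm w m‖ = ‖jacobiTheta₂_term m (w / 2) (I / 4)‖ := by
  rw [diffTerm, norm_mul, norm_mul, norm_diffSign, one_mul, ← norm_mul, ofReal_exp,
    ← Complex.exp_add, jacobiTheta₂_term]
  congr 2
  push_cast
  linear_combination (-(π * m ^ 2) / 4) * I_mul_I

theorem summable_diffTerm (w : ℂ) : Summable (diffTerm w) :=
  .of_norm_bounded ((summable_jacobiTheta₂_term_iff _ _).2 (by simp)).norm
    fun m => (norm_diffTerm w m).le

theorem theta1_one_zero_I_eq_tsum (w : ℂ) :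
    theta1 1 0 I w = ∑' n : ℤ, diffTerm w (2 * n + 1) := by
  refine tsum_congr fun n => ?_
  rw [diffTerm, diffSign_two_mul_add_one, one_mul, ofReal_exp, ← Complex.exp_add]
  congr 1
  push_cast
  linear_combination (π * (n + 1 / 2) ^ 2) * I_mul_I

theorem theta1_zero_one_I_eq_tsum (w : ℂ) :
    theta1 0 1 I w = -∑' n : ℤ, diffTerm w (2 * n) := by
  rw [← tsum_neg]
  refine tsum_congr fun n => ?_
  rw [diffTerm, diffSign_two_mul, ofReal_exp, ← exp_pi_mul_I, ← Complex.exp_int_mul, neg_mul,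
    neg_mul, neg_neg, ← Complex.exp_add, ← Complex.exp_add]
  congr 1
  push_cast
  linear_combination (π * n ^ 2) * I_mul_I

theorem hasSum_diffTerm (w : ℂ) : HasSum (diffTerm w) (theta1 1 0 I w - theta1 0 1 I w) := by
  have hs := summable_diffTerm w
  rw [sub_eq_neg_add, theta1_zero_one_I_eq_tsum, neg_neg, theta1_one_zero_I_eq_tsum]
  exact HasSum.int_even_add_odd (hs.comp_injective fun _ _ h => by omega).hasSum
    (hs.comp_injective fun _ _ h => by omega).hasSum

noncomputable def cosSum (w : ℂ) (n : ℕ) : ℂ :=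
  ∑ j ∈ Finset.range n, cos (π * w * (j - (n - 1) / 2))

theorem sin_mul_cosSum (w : ℂ) (n : ℕ) : sin (π * w / 2) * cosSum w n = sin (π * w * n / 2) := by
  have htel : ∀ j : ℕ, 2 * (sin (π * w / 2) * cos (π * w * (j - (n - 1) / 2))) =
      sin (π * w * ((j + 1 : ℕ) - n / 2)) - sin (π * w * (j - n / 2)) := fun j => by
    rw [show π * w * ((j + 1 : ℕ) - n / 2) = π * w * (j - (n - 1) / 2) + π * w / 2 by
        push_cast; ring,
      show π * w * (j - n / 2) = π * w * (j - (n - 1) / 2) - π * w / 2 by ring,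
      Complex.sin_add, Complex.sin_sub]
    ring
  have h := Finset.sum_range_sub (fun j : ℕ => sin (π * w * (j - n / 2))) n
  rw [← Finset.sum_congr rfl fun j _ => htel j, ← Finset.mul_sum, ← Finset.mul_sum] at h
  rw [Nat.cast_zero, show π * w * (0 - n / 2) = -(π * w * n / 2) by ring,
    show π * w * (n - n / 2) = π * w * n / 2 by ring, Complex.sin_neg] at h
  rw [cosSum]
  linear_combination h / 2

noncomputable def quotTerm (w : ℂ) (n : ℕ) : ℂ :=
  diffSign n * Real.exp (-π * n ^ 2 / 4) * cosSum w n ^ 2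

theorem diffTerm_add_diffTerm_neg (w : ℂ) (m : ℤ) :
    diffTerm w m + diffTerm w (-m) =
      diffSign m * Real.exp (-π * m ^ 2 / 4) * (2 * cos (π * m * w)) := by
  rw [diffTerm, diffTerm, diffSign_neg, Int.cast_neg, neg_sq, two_cos, ← mul_add]
  congr 3 <;> push_cast <;> ring

theorem diffTerm_pair_sub_pair_zero (w : ℂ) (n : ℕ) :
    diffTerm w n + diffTerm w (-n) - (diffTerm 0 n + diffTerm 0 (-n)) =
      -4 * sin (π * w / 2) ^ 2 * quotTerm w n := by
  have hcos : cos (π * n * w) = 1 - 2 * sin (π * w * n / 2) ^ 2 := by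
    rw [← Complex.cos_two_mul_eq_one_sub]; ring_nf
  rw [diffTerm_add_diffTerm_neg, diffTerm_add_diffTerm_neg, quotTerm, mul_zero, Complex.cos_zero]
  push_cast
  rw [hcos, ← sin_mul_cosSum]
  ring

theorem hasSum_quotTerm (w : ℂ) :
    HasSum (fun n => -4 * sin (π * w / 2) ^ 2 * quotTerm w n)
      (theta1 1 0 I w - theta1 0 1 I w) := by
  have h := (hasSum_diffTerm w).nat_add_neg.sub (hasSum_diffTerm 0).nat_add_neg
  rw [theta1_one_zero_I_zero_eq, sub_self, zero_add,
    show diffTerm w 0 = diffTerm 0 0 by simp [diffTerm], add_sub_cancel_right] at h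
  simpa only [diffTerm_pair_sub_pair_zero] using h

noncomputable def quotBound (n : ℕ) : ℝ :=
  Real.exp (-π * n ^ 2 / 4) * (∑ j ∈ Finset.range n, Real.cosh (π * (j - (n - 1) / 2) / 2)) ^ 2

theorem norm_cosSum_le {w : ℂ} (hw : |w.im| ≤ 1 / 2) (n : ℕ) :
    ‖cosSum w n‖ ≤ ∑ j ∈ Finset.range n, Real.cosh (π * (j - (n - 1) / 2) / 2) := by
  refine (norm_sum_le _ _).trans (Finset.sum_le_sum fun j _ => (norm_cos_le_cosh_im _).trans ?_)
  set t : ℝ := j - (n - 1) / 2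
  have him : (π * w * (j - (n - 1) / 2)).im = π * t * w.im := by
    rw [show (j - (n - 1) / 2 : ℂ) = (t : ℂ) by push_cast [t]; ring, Complex.im_mul_ofReal,
      Complex.im_ofReal_mul]
    ring
  rw [him, Real.cosh_le_cosh, abs_mul, abs_div, abs_two]
  exact (mul_le_mul_of_nonneg_left hw (abs_nonneg _)).trans_eq (by ring)

theorem norm_quotTerm_le {w : ℂ} (hw : |w.im| ≤ 1 / 2) (n : ℕ) : ‖quotTerm w n‖ ≤ quotBound n := by
  rw [quotTerm, quotBound, norm_mul, norm_mul, norm_diffSign, one_mul, norm_pow, Complex.norm_real,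
    Real.norm_of_nonneg (Real.exp_pos _).le]
  gcongr
  exact norm_cosSum_le hw n

theorem quotTerm_zero (w : ℂ) : quotTerm w 0 = 0 := by simp [quotTerm, cosSum]

theorem quotTerm_one (w : ℂ) : quotTerm w 1 = quotBound 1 := by
  simp [quotTerm, quotBound, cosSum, diffSign]

section Majorant

local notation "q" => Real.exp (-(π / 4))

theorem exp_neg_pi_div_four_le_half : q ≤ 1 / 2 := by
  calc q ≤ Real.exp (-Real.log 2) := Real.exp_le_exp.2 (by linarith [log_two_lt_d9, pi_gt_three])
    _ = 1 / 2 := by rw [Real.exp_neg, Real.exp_log two_pos, one_div]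

theorem two_mul_cosh_nat_mul_pi_div_four (k : ℕ) :
    2 * Real.cosh (k * (π / 4)) = (q ^ k)⁻¹ + q ^ k := by
  rw [Real.cosh_eq, ← Real.exp_nat_mul, ← Real.exp_neg]
  ring_nf

theorem quotBound_nonneg (n : ℕ) : 0 ≤ quotBound n := by
  unfold quotBound; positivity

theorem quotBound_one : quotBound 1 = q := by
  norm_num [quotBound]
  ring_nf

theorem quotBound_two : quotBound 2 = q ^ 2 * (1 + q ^ 2) ^ 2 := by
  have h := two_mul_cosh_nat_mul_pi_div_four 1
  norm_num [quotBound, Finset.sum_range_succ] at h ⊢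
  rw [show -(π * 4) / 4 = ((4 : ℕ) : ℝ) * -(π / 4) by push_cast; ring, Real.exp_nat_mul,
    show -(π * (1 / 2)) / 2 = -(π / 4) by ring, show π * (1 / 2) / 2 = π / 4 by ring, Real.cosh_neg,
    ← two_mul, h]
  field_simp

theorem quotBound_three : quotBound 3 = q ^ 5 * (1 + q ^ 2 + q ^ 4) ^ 2 := by
  have h := two_mul_cosh_nat_mul_pi_div_four 2
  norm_num [quotBound, Finset.sum_range_succ] at h ⊢
  rw [show (2 : ℝ) * (π / 4) = π / 2 by ring] at h
  rw [show -(π * 9) / 4 = ((9 : ℕ) : ℝ) * -(π / 4) by push_cast; ring, Real.exp_nat_mul,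
    show -π / 2 = -(π / 2) by ring, Real.cosh_neg, show Real.cosh (π / 2) + 1 + Real.cosh (π / 2) =
      2 * Real.cosh (π / 2) + 1 by ring, h]
  field_simp
  ring

theorem quotBound_succ_le (n : ℕ) : quotBound (n + 1) ≤ (n + 1) ^ 2 * q ^ (n ^ 2 + 1) := by
  have hsum : ∑ j ∈ Finset.range (n + 1), Real.cosh (π * (j - ((n + 1 : ℕ) - 1) / 2) / 2) ≤
      (n + 1) * Real.exp (π * n / 4) := by
    refine (Finset.sum_le_sum (g := fun _ => Real.exp (π * n / 4)) fun j hj =>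
      (cosh_le_exp_abs _).trans (Real.exp_le_exp.2 ?_)).trans_eq (by simp)
    have hj : (j : ℝ) ≤ n := by exact_mod_cast Finset.mem_range_succ_iff.1 hj
    rw [abs_le]; push_cast; constructor <;> nlinarith [pi_pos, (j.cast_nonneg : (0:ℝ) ≤ j)]
  calc quotBound (n + 1)
      ≤ Real.exp (-π * (n + 1 : ℕ) ^ 2 / 4) * ((n + 1) * Real.exp (π * n / 4)) ^ 2 := by
        unfold quotBound
        gcongr
    _ = (n + 1) ^ 2 * q ^ (n ^ 2 + 1) := by
        rw [mul_pow, ← Real.exp_nat_mul, ← Real.exp_nat_mul, mul_left_comm, ← Real.exp_add]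
        push_cast
        ring_nf

theorem nat_add_four_sq_le (k : ℕ) : (k + 4) ^ 2 ≤ 16 * 2 ^ k := by
  induction k with
  | zero => norm_num
  | succ k ih =>
    calc (k + 1 + 4) ^ 2 ≤ 2 * (k + 4) ^ 2 := by nlinarith [Nat.zero_le (k * k)]
      _ ≤ 2 * (16 * 2 ^ k) := by omega
      _ = 16 * 2 ^ (k + 1) := by ring

theorem quotBound_add_four_le (k : ℕ) : quotBound (k + 4) ≤ 16 * q ^ 10 * (2 * q ^ 6) ^ k := by
  have hq : 0 ≤ q := (Real.exp_pos _).le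
  have hq1 : q ≤ 1 := exp_neg_pi_div_four_le_half.trans (by norm_num)
  have hk : ((k : ℝ) + 4) ^ 2 ≤ 16 * 2 ^ k := by exact_mod_cast nat_add_four_sq_le k
  have hpow : q ^ ((k + 3) ^ 2 + 1) ≤ q ^ 10 * (q ^ 6) ^ k := by
    rw [← pow_mul, ← pow_add]
    exact pow_le_pow_of_le_one hq hq1 (by nlinarith)
  calc quotBound (k + 4) ≤ ((k : ℝ) + 4) ^ 2 * q ^ ((k + 3) ^ 2 + 1) := by
        have := quotBound_succ_le (k + 3)
        push_cast at this
        linarith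
    _ ≤ 16 * 2 ^ k * (q ^ 10 * (q ^ 6) ^ k) := by gcongr
    _ = 16 * q ^ 10 * (2 * q ^ 6) ^ k := by ring

theorem two_mul_pow_six_lt_one : 2 * q ^ 6 < 1 := by
  nlinarith [pow_le_pow_left₀ (Real.exp_pos _).le exp_neg_pi_div_four_le_half 6]

theorem summable_quotBound_add_four : Summable fun k => quotBound (k + 4) :=
  .of_nonneg_of_le (fun k => quotBound_nonneg _) quotBound_add_four_le
    ((summable_geometric_of_lt_one (by positivity) two_mul_pow_six_lt_one).mul_left _)

theorem tsum_quotBound_add_four_le : ∑' k, quotBound (k + 4) ≤ 16 * q ^ 10 / (1 - 2 * q ^ 6) := by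
  refine (Summable.tsum_le_tsum quotBound_add_four_le summable_quotBound_add_four
    ((summable_geometric_of_lt_one (by positivity) two_mul_pow_six_lt_one).mul_left _)).trans_eq ?_
  rw [tsum_mul_left, tsum_geometric_of_lt_one (by positivity) two_mul_pow_six_lt_one]
  exact (div_eq_mul_inv _ _).symm

theorem summable_quotBound : Summable quotBound :=
  (summable_nat_add_iff 4).1 summable_quotBound_add_four

theorem majorant_sum_lt_self {x : ℝ} (hx : 0 < x) (hx2 : x ≤ 1 / 2) :
    x ^ 2 * (1 + x ^ 2) ^ 2 + x ^ 5 * (1 + x ^ 2 + x ^ 4) ^ 2 + 16 * x ^ 10 / (1 - 2 * x ^ 6) <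
      x := by
  have hd : 1 - 2 * (1 / 2 : ℝ) ^ 6 ≤ 1 - 2 * x ^ 6 := by gcongr
  have h3 : 16 * x ^ 9 / (1 - 2 * x ^ 6) ≤ 16 * (1 / 2) ^ 9 / (1 - 2 * (1 / 2) ^ 6) := by gcongr
  have h1 : x * (1 + x ^ 2) ^ 2 ≤ 1 / 2 * (1 + (1 / 2) ^ 2) ^ 2 := by gcongr
  have h2 : x ^ 4 * (1 + x ^ 2 + x ^ 4) ^ 2 ≤
      (1 / 2) ^ 4 * (1 + (1 / 2) ^ 2 + (1 / 2) ^ 4) ^ 2 := by gcongr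
  calc _ = x * (x * (1 + x ^ 2) ^ 2 + x ^ 4 * (1 + x ^ 2 + x ^ 4) ^ 2 +
        16 * x ^ 9 / (1 - 2 * x ^ 6)) := by ring
    _ < x * 1 := by gcongr; norm_num at h1 h2 h3 ⊢; linarith
    _ = x := mul_one x

theorem tsum_quotBound_add_two_lt : ∑' n, quotBound (n + 2) < quotBound 1 := by
  have h := ((summable_nat_add_iff 2).2 summable_quotBound).sum_add_tsum_nat_add 2
  simp only [Finset.sum_range_succ, Finset.sum_range_zero, zero_add, add_assoc] at h
  norm_num at h
  rw [← h, quotBound_two, quotBound_three, quotBound_one, ← add_assoc]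
  linarith [tsum_quotBound_add_four_le,
    majorant_sum_lt_self (Real.exp_pos _) exp_neg_pi_div_four_le_half]

end Majorant

theorem not_hasSum_quotTerm_zero {w : ℂ} (hw : |w.im| ≤ 1 / 2) : ¬HasSum (quotTerm w) 0 := by
  intro h
  have hsplit := h.summable.sum_add_tsum_nat_add 2
  rw [h.tsum_eq, Finset.sum_range_succ, Finset.sum_range_one, quotTerm_zero, zero_add] at hsplit
  have htail : ‖∑' n, quotTerm w (n + 2)‖ ≤ ∑' n, quotBound (n + 2) :=
    tsum_of_norm_bounded ((summable_nat_add_iff 2).2 summable_quotBound).hasSum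
      fun n => norm_quotTerm_le hw _
  have hone : ‖quotTerm w 1‖ = quotBound 1 := by
    rw [quotTerm_one, Complex.norm_real, Real.norm_of_nonneg (quotBound_nonneg 1)]
  rw [eq_neg_of_add_eq_zero_left hsplit, norm_neg] at hone
  linarith [tsum_quotBound_add_two_lt]

theorem exists_eq_two_mul_of_theta1_eq {w : ℂ} (hw : |w.im| ≤ 1 / 2)
    (h : theta1 1 0 I w = theta1 0 1 I w) : ∃ k : ℤ, w = 2 * k := by
  have hs := hasSum_quotTerm w
  rw [h, sub_self] at hs
  by_cases hsin : sin (π * w / 2) = 0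
  · obtain ⟨k, hk⟩ := Complex.sin_eq_zero_iff.1 hsin
    refine ⟨k, mul_left_cancel₀ (ofReal_ne_zero.2 pi_ne_zero) ?_⟩
    linear_combination 2 * hk
  · rw [← mul_zero (-4 * sin (π * w / 2) ^ 2 : ℂ)] at hs
    exact (not_hasSum_quotTerm_zero hw ((hasSum_mul_left_iff (by simpa using hsin)).1 hs)).elim

theorem exists_eq_of_theta1_sq_eq {w : ℂ} (hw : |w.im| ≤ 1 / 2)
    (h : theta1 1 0 I w ^ 2 = theta1 0 1 I w ^ 2) : ∃ n : ℤ, w = n := by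
  rcases sq_eq_sq_iff_eq_or_eq_neg.1 h with h | h
  · obtain ⟨k, hk⟩ := exists_eq_two_mul_of_theta1_eq hw h
    exact ⟨2 * k, by rw [hk]; push_cast; ring⟩
  · have h' : theta1 1 0 I (w + 1) = theta1 0 1 I (w + 1) := by
      rw [theta1_add_one, theta1_add_one, h]
      simp
    obtain ⟨k, hk⟩ := exists_eq_two_mul_of_theta1_eq (by simpa using hw) h'
    exact ⟨2 * k - 1, by push_cast; linear_combination hk⟩

end ThetaLattice

end

/-- If `θ[1;0](i,z)² = θ[0;1](i,z)²`, then `z` is a lattice point of `ℤ + ℤi`. -/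
theorem stmt_18 (z : ℂ) (h : theta1 1 0 I z ^ 2 = theta1 0 1 I z ^ 2) :
    ∃ m n : ℤ, z = (n : ℂ) + (m : ℂ) * I := by
  have hw : |(z - round z.im * I).im| ≤ 1 / 2 := by simpa using abs_sub_round z.im
  obtain ⟨n, hn⟩ := ThetaLattice.exists_eq_of_theta1_sq_eq hw
    (((periodic_theta1_sq_eq 1 0 0 1 I).sub_int_mul_eq (round z.im)).mpr h)
  exact ⟨round z.im, n, by linear_combination hn⟩
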